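/- arXiv:2605.01972 — 4 statements merged into one kernel-verified Lean document; each statement's English description precedes it below -/
import Mathlib

section
/- Assume ψ : [0,1] → [0,∞) is continuous and strictly increasing with ψ(0) = 0, and that x ↦ ψ(x)/x is strictly increasing on (0,1). Let δ ∈ (0, ψ(1)) satisfy 1 − δ ≥ δ/ψ⁻¹(δ) (equivalently, δ does not exceed the unique solution δ* of 1 − δ = δ/ψ⁻¹(δ)), and let x_N, x_T ∈ ℂ with |x_N| ≤ min(1, δ/ψ⁻¹(δ))·|x_T|. Then κ_{G_ψ}(p_δ; (x_N, x_T)) = |x_T|. -/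
open Complex Metric Set

/-- The Kobayashi–Royden metric of a domain `Ω ⊆ ℂ²` at point `z` in direction `X`:
the infimum of `1/λ` over all `λ > 0` admitting a holomorphic map `φ : 𝔻 → Ω`
with `φ 0 = z` and `φ' 0 = λ • X`. -/
noncomputable def kob (Ω : Set (ℂ × ℂ)) (z X : ℂ × ℂ) : ℝ :=
  sInf {c : ℝ | ∃ lam : ℝ, 0 < lam ∧ c = 1 / lam ∧
    ∃ φ : ℂ → ℂ × ℂ, DifferentiableOn ℂ φ (ball (0 : ℂ) 1) ∧
      MapsTo φ (ball (0 : ℂ) 1) Ω ∧ φ 0 = z ∧ deriv φ 0 = lam • X}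

/-- The model domain `G_ψ = {z ∈ 𝔻² : Re z₁ < ψ(|z₂|)}`. -/
def Gpsi (ψ : ℝ → ℝ) : Set (ℂ × ℂ) :=
  {z : ℂ × ℂ | ‖z.1‖ < 1 ∧ ‖z.2‖ < 1 ∧ z.1.re < ψ ‖z.2‖}

/-- The base point `p_δ = (-δ, 0)`. -/
noncomputable def pdel (δ : ℝ) : ℂ × ℂ := ((-δ : ℂ), 0)

/-!
The lower bound `κ ≥ |x_T|` is the Schwarz lemma applied to the second coordinate of a competing
disc, which maps `𝔻` into `𝔻` and sends `0` to `0`. For the upper bound, let `a = ψ⁻¹(δ)` and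
take the affine disc `ζ ↦ p_δ + ζ (x_N, x_T)/|x_T|`. Writing `t = |ζ|`, its first coordinate has
real part at most `-δ + (δ/a) t`, which lies below `ψ(t)`: for `t ≤ a` because `ψ ≥ 0`, and for
`t > a` because `ψ(t)/t > ψ(a)/a = δ/a`. Its modulus is at most `δ + (δ/a) t < δ + (1 - δ) = 1`.
-/

def kobSet (Ω : Set (ℂ × ℂ)) (z X : ℂ × ℂ) : Set ℝ :=
  {c : ℝ | ∃ lam : ℝ, 0 < lam ∧ c = 1 / lam ∧
    ∃ φ : ℂ → ℂ × ℂ, DifferentiableOn ℂ φ (ball (0 : ℂ) 1) ∧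
      MapsTo φ (ball (0 : ℂ) 1) Ω ∧ φ 0 = z ∧ deriv φ 0 = lam • X}

theorem kob_eq_sInf_kobSet (Ω : Set (ℂ × ℂ)) (z X : ℂ × ℂ) : kob Ω z X = sInf (kobSet Ω z X) :=
  rfl

theorem kobSet_zero {Ω : Set (ℂ × ℂ)} {z : ℂ × ℂ} (hz : z ∈ Ω) : kobSet Ω z 0 = Ioi 0 := by
  ext c
  constructor
  · rintro ⟨lam, hlam, rfl, -⟩
    exact one_div_pos.mpr hlam
  · intro hc
    exact ⟨1 / c, one_div_pos.mpr hc, (one_div_one_div c).symm, fun _ => z,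
      differentiableOn_const z, fun _ _ => hz, rfl, by simp⟩

theorem kob_zero {Ω : Set (ℂ × ℂ)} {z : ℂ × ℂ} (hz : z ∈ Ω) : kob Ω z 0 = 0 := by
  rw [kob_eq_sInf_kobSet, kobSet_zero hz, csInf_Ioi]

theorem one_div_mem_kobSet_of_affine {Ω : Set (ℂ × ℂ)} {z X v : ℂ × ℂ} {lam : ℝ}
    (hlam : 0 < lam) (hv : v = lam • X) (hmaps : ∀ ζ ∈ ball (0 : ℂ) 1, z + ζ • v ∈ Ω) :
    1 / lam ∈ kobSet Ω z X := by
  have hderiv (ζ : ℂ) : HasDerivAt (fun ζ : ℂ => z + ζ • v) v ζ := by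
    simpa using ((hasDerivAt_id ζ).smul_const v).const_add z
  exact ⟨lam, hlam, rfl, fun ζ => z + ζ • v,
    fun ζ _ => (hderiv ζ).differentiableAt.differentiableWithinAt, hmaps, by simp,
    (hderiv 0).deriv.trans hv⟩

theorem norm_snd_le_of_mem_kobSet {Ω : Set (ℂ × ℂ)} (hΩ : ∀ w ∈ Ω, ‖w.2‖ < 1)
    {z X : ℂ × ℂ} (hz : z.2 = 0) {c : ℝ} (hc : c ∈ kobSet Ω z X) : ‖X.2‖ ≤ c := by
  obtain ⟨lam, hlam, rfl, φ, hdiff, hmaps, hφ0, hderiv⟩ := hc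
  have hφ : DifferentiableAt ℂ φ 0 :=
    hdiff.differentiableAt (isOpen_ball.mem_nhds (mem_ball_self one_pos))
  have hsnd_deriv : deriv (fun ζ => (φ ζ).2) 0 = lam • X.2 := by
    simpa [hderiv] using hφ.hasDerivAt.hasFDerivAt.snd.hasDerivAt.deriv
  have hsnd_maps : MapsTo (fun ζ => (φ ζ).2) (ball 0 1) (closedBall (φ 0).2 1) := by
    intro ζ hζ
    rw [hφ0, hz, mem_closedBall_zero_iff]
    exact (hΩ _ (hmaps hζ)).le
  have hschwarz := norm_deriv_le_one_of_mapsTo_ball hdiff.snd hsnd_maps one_pos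
  rw [hsnd_deriv, norm_smul, Real.norm_of_nonneg hlam.le] at hschwarz
  rwa [le_div_iff₀ hlam, mul_comm]

theorem mul_lt_add_of_strictMonoOn_div {ψ : ℝ → ℝ} (hnonneg : ∀ x ∈ Icc (0 : ℝ) 1, 0 ≤ ψ x)
    (hquot : StrictMonoOn (fun x => ψ x / x) (Ioo 0 1)) {a t : ℝ} (ha : a ∈ Ioo 0 1)
    (hψa : 0 < ψ a) (ht : t ∈ Ico 0 1) : ψ a / a * t < ψ a + ψ t := by
  rcases lt_trichotomy t a with hta | rfl | hta
  · have : ψ a / a * t < ψ a := by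
      rw [div_mul_eq_mul_div, div_lt_iff₀ ha.1]
      exact mul_lt_mul_of_pos_left hta hψa
    linarith [hnonneg t (Ico_subset_Icc_self ht)]
  · rw [div_mul_cancel₀ _ ha.1.ne']
    linarith
  · have htpos : 0 < t := ha.1.trans hta
    have : ψ a / a * t < ψ t := by
      rw [← lt_div_iff₀ htpos]
      exact hquot ha ⟨htpos, ht.2⟩ hta
    linarith

theorem pdel_mem_Gpsi {ψ : ℝ → ℝ} (hψ0 : ψ 0 = 0) {δ : ℝ} (hδ : δ ∈ Ioo 0 1) :
    pdel δ ∈ Gpsi ψ := by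
  simp [pdel, Gpsi, hψ0, abs_of_pos hδ.1, hδ.1, hδ.2]

theorem pdel_add_smul_mem_Gpsi {ψ : ℝ → ℝ} (hnonneg : ∀ x ∈ Icc (0 : ℝ) 1, 0 ≤ ψ x)
    (hquot : StrictMonoOn (fun x => ψ x / x) (Ioo 0 1)) {a δ : ℝ} (ha : a ∈ Ioo 0 1)
    (haδ : ψ a = δ) (hδ : 0 < δ) (hsmall : δ / a ≤ 1 - δ) {c u : ℂ} (hc : ‖c‖ ≤ δ / a)
    (hu : ‖u‖ = 1) {ζ : ℂ} (hζ : ζ ∈ ball (0 : ℂ) 1) :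
    pdel δ + ζ • (c, u) ∈ Gpsi ψ := by
  rw [mem_ball_zero_iff] at hζ
  have hcζ : ‖c * ζ‖ ≤ δ / a * ‖ζ‖ := by
    rw [norm_mul]
    exact mul_le_mul_of_nonneg_right hc (norm_nonneg ζ)
  have hfst : (pdel δ + ζ • (c, u)).1 = -δ + c * ζ := by simp [pdel, mul_comm]
  have hsnd : ‖(pdel δ + ζ • (c, u)).2‖ = ‖ζ‖ := by simp [pdel, hu]
  refine ⟨?_, hsnd.trans_lt hζ, ?_⟩
  · have hlt : δ / a * ‖ζ‖ < 1 - δ :=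
      (mul_lt_of_lt_one_right (div_pos hδ ha.1) hζ).trans_le hsmall
    calc ‖(pdel δ + ζ • (c, u)).1‖ ≤ ‖(-δ : ℂ)‖ + ‖c * ζ‖ := hfst ▸ norm_add_le _ _
      _ < 1 := by
        rw [norm_neg, norm_real, Real.norm_of_nonneg hδ.le]
        linarith
  · have hre : (-δ + c * ζ).re ≤ -δ + ‖c * ζ‖ := by
      simpa using re_le_norm (c * ζ)
    have hkey := mul_lt_add_of_strictMonoOn_div hnonneg hquot ha (haδ ▸ hδ)
      ⟨norm_nonneg ζ, hζ⟩
    rw [haδ] at hkey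
    rw [hfst, hsnd]
    linarith

theorem stmt2_general (ψ ψinv : ℝ → ℝ)
    (hcont : ContinuousOn ψ (Icc 0 1)) (hψ0 : ψ 0 = 0)
    (hnonneg : ∀ x ∈ Icc (0 : ℝ) 1, 0 ≤ ψ x)
    (hinv1 : ∀ x ∈ Icc (0 : ℝ) 1, ψinv (ψ x) = x)
    (hquot : StrictMonoOn (fun x => ψ x / x) (Ioo 0 1))
    (δ : ℝ) (hδ : δ ∈ Ioo 0 (ψ 1))
    (hδsmall : δ / ψinv δ ≤ 1 - δ)
    (xN xT : ℂ)
    (hmaj : ‖xN‖ ≤ min 1 (δ / ψinv δ) * ‖xT‖) :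
    kob (Gpsi ψ) (pdel δ) (xN, xT) = ‖xT‖ := by
  obtain ⟨a, ha, haδ⟩ : ∃ a ∈ Ioo (0 : ℝ) 1, ψ a = δ :=
    intermediate_value_Ioo zero_le_one hcont (by rwa [hψ0])
  rw [← haδ, hinv1 a (Ioo_subset_Icc_self ha), haδ] at hδsmall hmaj
  rcases eq_or_ne xT 0 with rfl | hxT
  · have hxN : xN = 0 := by simpa using hmaj
    have hδ1 : δ < 1 := by linarith [div_pos hδ.1 ha.1]
    rw [hxN, norm_zero, ← Prod.zero_eq_mk, kob_zero (pdel_mem_Gpsi hψ0 ⟨hδ.1, hδ1⟩)]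
  have hT : 0 < ‖xT‖ := norm_pos_iff.mpr hxT
  have hmem : ‖xT‖ ∈ kobSet (Gpsi ψ) (pdel δ) (xN, xT) := by
    rw [← one_div_one_div ‖xT‖]
    refine one_div_mem_kobSet_of_affine (one_div_pos.mpr hT) rfl fun ζ hζ => ?_
    refine pdel_add_smul_mem_Gpsi hnonneg hquot ha haδ hδ.1 hδsmall ?_ ?_ hζ
    · rw [norm_smul, norm_div, norm_one, Real.norm_of_nonneg hT.le, one_div_mul_eq_div,
        div_le_iff₀ hT]
      exact hmaj.trans (mul_le_mul_of_nonneg_right (min_le_right _ _) hT.le)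
    · rw [norm_smul, norm_div, norm_one, Real.norm_of_nonneg hT.le, one_div_mul_cancel hT.ne']
  exact IsLeast.csInf_eq ⟨hmem, fun c hc => norm_snd_le_of_mem_kobSet (fun w hw => hw.2.1) rfl hc⟩

/-- exact value of the Kobayashi–Royden metric in nearly tangential directions
when `ψ(x)/x` is strictly increasing and `δ` is small. -/
theorem stmt2 (ψ ψinv : ℝ → ℝ)
    (hcont : ContinuousOn ψ (Icc 0 1)) (hψ0 : ψ 0 = 0)
    (hnonneg : ∀ x ∈ Icc (0 : ℝ) 1, 0 ≤ ψ x)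
    (hmono : StrictMonoOn ψ (Icc 0 1))
    (hinv1 : ∀ x ∈ Icc (0 : ℝ) 1, ψinv (ψ x) = x)
    (hinv2 : ∀ y ∈ Icc 0 (ψ 1), ψ (ψinv y) = y)
    (hquot : StrictMonoOn (fun x => ψ x / x) (Ioo 0 1))
    (δ : ℝ) (hδ : δ ∈ Ioo 0 (ψ 1))
    (hδsmall : δ / ψinv δ ≤ 1 - δ)
    (xN xT : ℂ)
    (hmaj : ‖xN‖ ≤ min 1 (δ / ψinv δ) * ‖xT‖) :
    kob (Gpsi ψ) (pdel δ) (xN, xT) = ‖xT‖ :=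
  stmt2_general ψ ψinv hcont hψ0 hnonneg hinv1 hquot δ hδ hδsmall xN xT hmaj
end

section
/- Let β > 1 and ψ(x) = x^β. Let δ ∈ (0,1) satisfy 1 − δ ≥ δ^{1 − 1/β} (equivalently, δ does not exceed the unique solution δ* of 1 − δ = δ^{1−1/β}). Then for all x_N, x_T ∈ ℂ with δ^{1/β − 1}·|x_N| ≤ |x_T|: κ_{G_ψ}(p_δ; (x_N, x_T)) = |x_T|. -/
open Complex Metric Set

/-! The second coordinate of any analytic disc through `p_δ` in `G_ψ ⊆ ℂ × 𝔻` is a self-map of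
`𝔻` fixing `0`, so the Schwarz lemma gives `κ(p_δ; X) ≥ |x_T|`. Conversely, when
`|x_N| ≤ δ^{1-1/β} |x_T|` the affine disc `ζ ↦ p_δ + ζ X / |x_T|` stays in `G_ψ`: its first
coordinate is bounded by `δ + δ^{1-1/β} < 1`, and its real part by
`-δ + δ^{1-1/β} t < t^β` (`t = |ζ|`), which is weighted AM-GM. -/

lemma rpow_one_sub_inv_mul_lt_add_rpow {β δ t : ℝ} (hβ : 1 ≤ β) (hδ : 0 < δ) (ht : 0 ≤ t) :
    δ ^ (1 - 1 / β) * t < δ + t ^ β := by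
  have hβ0 : 0 < β := by linarith
  have hw : 0 < 1 / β := by positivity
  have hw' : 0 ≤ 1 - 1 / β := sub_nonneg.2 ((div_le_one hβ0).2 hβ)
  have amgm := Real.geom_mean_le_arith_mean2_weighted hw' hw.le hδ.le (Real.rpow_nonneg ht β)
    (by ring)
  rw [← Real.rpow_mul ht, mul_one_div_cancel hβ0.ne', Real.rpow_one] at amgm
  have hpow : 1 / β * t ^ β ≤ t ^ β :=
    mul_le_of_le_one_left (Real.rpow_nonneg ht β) ((div_le_one hβ0).2 hβ)
  have hδw : 0 < 1 / β * δ := mul_pos hw hδ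
  linarith

lemma norm_deriv_snd_le_one {φ : ℂ → ℂ × ℂ} (hφ : DifferentiableOn ℂ φ (ball 0 1))
    (hmaps : MapsTo φ (ball 0 1) {w | ‖w.2‖ < 1}) (h0 : (φ 0).2 = 0) :
    ‖(deriv φ 0).2‖ ≤ 1 := by
  have hda : HasDerivAt φ (deriv φ 0) 0 :=
    (hφ.differentiableAt (ball_mem_nhds 0 one_pos)).hasDerivAt
  have hsnd : deriv (fun ζ => (φ ζ).2) 0 = (deriv φ 0).2 :=
    ((hasFDerivAt_snd (p := φ 0)).comp_hasDerivAt (0 : ℂ) hda).deriv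
  have hmaps_snd : MapsTo (fun ζ => (φ ζ).2) (ball 0 1) (closedBall (φ 0).2 1) := fun ζ hζ => by
    simpa [h0] using (hmaps hζ).le
  simpa [hsnd] using Complex.norm_deriv_le_div_of_mapsTo_ball hφ.snd hmaps_snd one_pos

section Kobayashi

variable {Ω : Set (ℂ × ℂ)} {z X : ℂ × ℂ}

lemma kob_nonneg : 0 ≤ kob Ω z X :=
  Real.sInf_nonneg fun _ ⟨_, hlam, hc, _⟩ => hc ▸ (one_div_pos.2 hlam).le

lemma exists_disc_of_mapsTo_affine {lam : ℝ}
    (hmaps : MapsTo (fun ζ : ℂ => z + ζ • (lam • X)) (ball 0 1) Ω) :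
    ∃ φ : ℂ → ℂ × ℂ, DifferentiableOn ℂ φ (ball (0 : ℂ) 1) ∧
      MapsTo φ (ball (0 : ℂ) 1) Ω ∧ φ 0 = z ∧ deriv φ 0 = lam • X := by
  have hda : HasDerivAt (fun ζ : ℂ => z + ζ • (lam • X)) (lam • X) 0 := by
    simpa using ((hasDerivAt_id (0 : ℂ)).smul_const (lam • X)).const_add z
  exact ⟨_, by fun_prop, hmaps, by simp, hda.deriv⟩

lemma kob_le_inv_of_mapsTo_affine {lam : ℝ} (hlam : 0 < lam)
    (hmaps : MapsTo (fun ζ : ℂ => z + ζ • (lam • X)) (ball 0 1) Ω) :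
    kob Ω z X ≤ lam⁻¹ :=
  csInf_le ⟨0, fun _ ⟨_, hl, hc, _⟩ => hc ▸ (one_div_pos.2 hl).le⟩
    ⟨lam, hlam, one_div lam ▸ rfl, exists_disc_of_mapsTo_affine hmaps⟩

lemma kob_zero_right (hz : z ∈ Ω) : kob Ω z 0 = 0 := by
  refine le_antisymm (le_of_forall_pos_le_add fun ε hε => ?_) kob_nonneg
  have hconst : MapsTo (fun ζ : ℂ => z + ζ • (ε⁻¹ • (0 : ℂ × ℂ))) (ball 0 1) Ω := fun _ _ => by
    simpa using hz
  simpa using kob_le_inv_of_mapsTo_affine (inv_pos.2 hε) hconst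

lemma norm_snd_le_kob (hΩ : Ω ⊆ {w | ‖w.2‖ < 1}) (hz : z.2 = 0) {lam : ℝ} (hlam : 0 < lam)
    (hmaps : MapsTo (fun ζ : ℂ => z + ζ • (lam • X)) (ball 0 1) Ω) :
    ‖X.2‖ ≤ kob Ω z X := by
  refine le_csInf ⟨_, lam, hlam, rfl, exists_disc_of_mapsTo_affine hmaps⟩ ?_
  rintro _ ⟨l, hl, rfl, φ, hφ, hφΩ, hφ0, hφ'⟩
  have hschwarz := norm_deriv_snd_le_one hφ (hφΩ.mono_right hΩ) (by rw [hφ0, hz])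
  rw [hφ', Prod.smul_snd, norm_smul, Real.norm_of_nonneg hl.le] at hschwarz
  rwa [le_div_iff₀ hl, mul_comm]

end Kobayashi

lemma mem_Gpsi_rpow {β δ : ℝ} (hβ : 1 ≤ β) (hδ : 0 < δ) (hδsmall : δ ^ (1 - 1 / β) ≤ 1 - δ)
    {w : ℂ × ℂ} (hw₂ : ‖w.2‖ < 1) (hw₁ : ‖w.1 + δ‖ ≤ δ ^ (1 - 1 / β) * ‖w.2‖) :
    w ∈ Gpsi (fun x => x ^ β) := by
  have hr : 0 < δ ^ (1 - 1 / β) := Real.rpow_pos_of_pos hδ _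
  have hδnorm : ‖(δ : ℂ)‖ = δ := by simp [hδ.le]
  refine ⟨?_, hw₂, ?_⟩
  · have hw₂r := mul_lt_mul_of_pos_left hw₂ hr
    calc ‖w.1‖ = ‖(w.1 + δ) - δ‖ := by rw [add_sub_cancel_right]
      _ ≤ ‖w.1 + δ‖ + ‖(δ : ℂ)‖ := norm_sub_le _ _
      _ < 1 := by linarith
  · have hre : (w.1 + δ).re ≤ ‖w.1 + δ‖ := re_le_norm _
    have hkey := rpow_one_sub_inv_mul_lt_add_rpow hβ hδ (norm_nonneg w.2)
    simp only [add_re, ofReal_re] at hre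
    linarith

lemma mapsTo_affine_Gpsi_rpow {β δ : ℝ} (hβ : 1 ≤ β) (hδ : 0 < δ)
    (hδsmall : δ ^ (1 - 1 / β) ≤ 1 - δ) {v : ℂ × ℂ} (hv₁ : ‖v.1‖ ≤ δ ^ (1 - 1 / β))
    (hv₂ : ‖v.2‖ = 1) :
    MapsTo (fun ζ : ℂ => pdel δ + ζ • v) (ball 0 1) (Gpsi (fun x => x ^ β)) := by
  intro ζ hζ
  rw [mem_ball_zero_iff] at hζ
  have hsnd : ‖(pdel δ + ζ • v).2‖ = ‖ζ‖ := by simp [pdel, hv₂]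
  refine mem_Gpsi_rpow hβ hδ hδsmall (hsnd ▸ hζ) ?_
  rw [hsnd, mul_comm]
  simpa [pdel, norm_smul] using mul_le_mul_of_nonneg_left hv₁ (norm_nonneg ζ)

/-- for `ψ(x) = x^β`, `β > 1`, `δ` small (`1 − δ ≥ δ^{1−1/β}`), and
`δ^{1/β−1}|x_N| ≤ |x_T|`, the Kobayashi–Royden metric equals `|x_T|`. -/
theorem stmt12 (β : ℝ) (hβ : 1 < β) (δ : ℝ) (hδ : δ ∈ Ioo (0 : ℝ) 1)
    (hδsmall : δ ^ (1 - 1 / β) ≤ 1 - δ)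
    (xN xT : ℂ) (hmaj : δ ^ (1 / β - 1) * ‖xN‖ ≤ ‖xT‖) :
    kob (Gpsi (fun x => x ^ β)) (pdel δ) (xN, xT) = ‖xT‖ := by
  obtain ⟨hδ0, -⟩ := hδ
  have hr : 0 < δ ^ (1 - 1 / β) := Real.rpow_pos_of_pos hδ0 _
  have hNT : ‖xN‖ ≤ δ ^ (1 - 1 / β) * ‖xT‖ := by
    rwa [show 1 / β - 1 = -(1 - 1 / β) by ring, Real.rpow_neg hδ0.le, inv_mul_le_iff₀ hr] at hmaj
  rcases eq_or_ne xT 0 with rfl | hxT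
  · obtain rfl : xN = 0 := norm_le_zero_iff.1 (by simpa using hNT)
    rw [norm_zero, ← Prod.zero_eq_mk]
    exact kob_zero_right (show pdel δ ∈ Gpsi (fun x => x ^ β) from
      mem_Gpsi_rpow hβ.le hδ0 hδsmall (by simp [pdel]) (by simp [pdel]))
  have hxT' : 0 < ‖xT‖ := norm_pos_iff.2 hxT
  have hdisc := mapsTo_affine_Gpsi_rpow (v := ‖xT‖⁻¹ • (xN, xT)) hβ.le hδ0 hδsmall
    (by simpa [mul_inv_le_iff₀ hxT', mul_comm] using hNT)
    (by simp [hxT'.ne'])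
  exact le_antisymm (by simpa using kob_le_inv_of_mapsTo_affine (inv_pos.2 hxT') hdisc)
    (norm_snd_le_kob (fun w hw => hw.2.1) rfl (inv_pos.2 hxT') hdisc)
end

section
/- Let ψ : [0,1] → [0,∞) be continuous and nondecreasing with ψ(0) = 0, let δ ∈ (0,1), x_T ∈ ℂ and λ > 0. Suppose φ = (φ₁, φ₂) : 𝔻 → G_ψ is a holomorphic map with φ(0) = p_δ = (−δ, 0) and φ′(0) = λ·(1, x_T). Then for every r ∈ (0,1], setting M := ψ(min(1, r·(λ·|x_T| + r))), one has λ ≤ 2(M + δ)/r. -/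
/-!
The second coordinate `φ₂` is a self-map of the disc fixing `0` with `φ₂'(0) = λ x_T`, so
Schwarz–Pick applied to `φ₂(z) / z` gives `|φ₂ z| ≤ |z| (λ |x_T| + |z|)`, which is at most
`min 1 (r (λ |x_T| + r))` for `|z| < r`. As `ψ` is monotone, `φ₁ + δ` then maps the disc of
radius `r` into the half-plane `Re w < M + δ` and vanishes at `0`; the Cayley transform of that
half-plane onto the unit disc and the Schwarz lemma bound its derivative `λ` at `0` by
`2 (M + δ) / r`.
-/

open Complex Metric Set Topology ComplexConjugate

section ProdDeriv

variable {𝕜 E F : Type*} [NontriviallyNormedField 𝕜] [NormedAddCommGroup E] [NormedSpace 𝕜 E]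
  [NormedAddCommGroup F] [NormedSpace 𝕜 F] {f : 𝕜 → E × F} {f' : E × F} {x : 𝕜}

theorem HasDerivAt.fst (h : HasDerivAt f f' x) : HasDerivAt (fun y => (f y).1) f'.1 x :=
  (ContinuousLinearMap.fst 𝕜 E F).hasFDerivAt.comp_hasDerivAt x h

theorem HasDerivAt.snd (h : HasDerivAt f f' x) : HasDerivAt (fun y => (f y).2) f'.2 x :=
  (ContinuousLinearMap.snd 𝕜 E F).hasFDerivAt.comp_hasDerivAt x h

end ProdDeriv

theorem sq_norm_one_sub_conj_mul_sub_sq_norm_sub (a w : ℂ) :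
    ‖1 - conj a * w‖ ^ 2 - ‖w - a‖ ^ 2 = (1 - ‖a‖ ^ 2) * (1 - ‖w‖ ^ 2) := by
  simp only [Complex.sq_norm, normSq_apply, mul_re, mul_im, sub_re, sub_im, conj_re, conj_im,
    one_re, one_im]
  ring

theorem norm_sub_le_norm_one_sub_conj_mul {a w : ℂ} (ha : ‖a‖ ≤ 1) (hw : ‖w‖ ≤ 1) :
    ‖w - a‖ ≤ ‖1 - conj a * w‖ := by
  have key := sq_norm_one_sub_conj_mul_sub_sq_norm_sub a w
  have : 0 ≤ (1 - ‖a‖ ^ 2) * (1 - ‖w‖ ^ 2) :=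
    mul_nonneg (by nlinarith [norm_nonneg a]) (by nlinarith [norm_nonneg w])
  exact (pow_le_pow_iff_left₀ (norm_nonneg _) (norm_nonneg _) two_ne_zero).mp (by linarith)

theorem norm_le_norm_add_of_norm_sub_le_mul {a w : ℂ} {t : ℝ} (ha : ‖a‖ < 1) (ht : 0 ≤ t)
    (ht1 : t < 1) (h : ‖w - a‖ ≤ t * ‖1 - conj a * w‖) : ‖w‖ ≤ ‖a‖ + t := by
  have key := sq_norm_one_sub_conj_mul_sub_sq_norm_sub a w
  set α := ‖a‖
  set s := ‖w‖
  set d := ‖1 - conj a * w‖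
  have hsq : ‖w - a‖ ^ 2 ≤ t ^ 2 * d ^ 2 := by
    rw [← mul_pow]; exact pow_le_pow_left₀ (norm_nonneg _) h 2
  have hpseudo : (1 - t ^ 2) * d ^ 2 ≤ (1 - α ^ 2) * (1 - s ^ 2) := by linarith
  have ht2 : 0 ≤ 1 - t ^ 2 := by nlinarith
  have hs1 : s ≤ 1 := by
    by_contra! hs
    have hα : 0 < 1 - α ^ 2 := by nlinarith [norm_nonneg a]
    nlinarith [mul_pos hα (show 0 < s ^ 2 - 1 by nlinarith), mul_nonneg ht2 (sq_nonneg d)]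
  have hd : 1 - α * s ≤ d := by
    calc 1 - α * s = ‖(1 : ℂ)‖ - ‖conj a * w‖ := by rw [norm_mul, norm_conj, norm_one]
      _ ≤ d := norm_sub_norm_le _ _
  have hαs : 0 ≤ 1 - α * s := by nlinarith [norm_nonneg a, norm_nonneg w]
  -- `(1 - t²)(1 - αs)² ≤ (1 - α²)(1 - s²)` is `(s - α)² ≤ t²(1 - αs)²` rearranged
  have hreal : (s - α) ^ 2 ≤ (t * (1 - α * s)) ^ 2 := by
    nlinarith [mul_le_mul_of_nonneg_left (pow_le_pow_left₀ hαs hd 2) ht2]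
  have := (abs_le_of_sq_le_sq' hreal (mul_nonneg ht hαs)).2
  nlinarith [mul_nonneg ht (mul_nonneg (norm_nonneg a) (norm_nonneg w))]

theorem norm_sub_le_mul_norm_one_sub_conj_mul_of_mapsTo {h : ℂ → ℂ}
    (hd : DifferentiableOn ℂ h (ball 0 1)) (hm : MapsTo h (ball 0 1) (closedBall 0 1))
    (h0 : ‖h 0‖ < 1) {z : ℂ} (hz : z ∈ ball (0 : ℂ) 1) :
    ‖h z - h 0‖ ≤ ‖z‖ * ‖1 - conj (h 0) * h z‖ := by
  set a := h 0
  have hle : ∀ w ∈ ball (0 : ℂ) 1, ‖h w‖ ≤ 1 := fun w hw => mem_closedBall_zero_iff.1 (hm hw)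
  have hden : ∀ w ∈ ball (0 : ℂ) 1, 1 - conj a * h w ≠ 0 := by
    intro w hw hzero
    have : ‖conj a * h w‖ < 1 := by
      rw [norm_mul, norm_conj]
      exact (mul_le_of_le_one_right (norm_nonneg a) (hle w hw)).trans_lt h0
    rw [← sub_eq_zero.1 hzero, norm_one] at this
    exact this.false
  -- the Möbius automorphism of the disc moving `a` to `0`, composed with `h`
  set k := fun w => (h w - a) / (1 - conj a * h w)
  have hkd : DifferentiableOn ℂ k (ball 0 1) :=
    (hd.sub_const a).div ((differentiableOn_const 1).sub (hd.const_mul _)) hden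
  have hkm : MapsTo k (ball 0 1) (closedBall 0 1) := fun w hw => by
    rw [mem_closedBall_zero_iff, norm_div]
    exact div_le_one_of_le₀ (norm_sub_le_norm_one_sub_conj_mul h0.le (hle w hw)) (norm_nonneg _)
  have hkz : ‖k z‖ ≤ ‖z‖ :=
    Complex.norm_le_norm_of_mapsTo_ball hkd hkm (by simp [k, a]) (mem_ball_zero_iff.1 hz)
  calc ‖h z - a‖ = ‖k z‖ * ‖1 - conj a * h z‖ := by
        rw [← norm_mul, div_mul_cancel₀ _ (hden z hz)]
    _ ≤ ‖z‖ * ‖1 - conj a * h z‖ := by gcongr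

theorem norm_le_mul_norm_deriv_add_of_mapsTo {f : ℂ → ℂ} (hd : DifferentiableOn ℂ f (ball 0 1))
    (hm : MapsTo f (ball 0 1) (ball 0 1)) (h0 : f 0 = 0) {z : ℂ} (hz : z ∈ ball (0 : ℂ) 1) :
    ‖f z‖ ≤ ‖z‖ * (‖deriv f 0‖ + ‖z‖) := by
  have hmc : MapsTo f (ball 0 1) (closedBall (f 0) 1) := by
    rw [h0]; exact hm.mono_right ball_subset_closedBall
  have hz1 : ‖z‖ < 1 := mem_ball_zero_iff.1 hz
  rcases le_or_gt 1 ‖deriv f 0‖ with hα | hα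
  · have := Complex.norm_le_norm_of_mapsTo_ball hd (hm.mono_right ball_subset_closedBall) h0 hz1
    nlinarith [norm_nonneg z]
  set g := dslope f 0
  have hball : ball (0 : ℂ) 1 ∈ 𝓝 0 := ball_mem_nhds 0 one_pos
  have hgd : DifferentiableOn ℂ g (ball 0 1) := (differentiableOn_dslope hball).mpr hd
  have hgm : MapsTo g (ball 0 1) (closedBall 0 1) := fun w hw => by
    simpa using Complex.norm_dslope_le_div_of_mapsTo_ball hd hmc hw
  have hg0 : g 0 = deriv f 0 := dslope_same f 0
  have hgz : ‖g z‖ ≤ ‖deriv f 0‖ + ‖z‖ := by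
    rw [← hg0] at hα ⊢
    exact norm_le_norm_add_of_norm_sub_le_mul hα (norm_nonneg z) hz1
      (norm_sub_le_mul_norm_one_sub_conj_mul_of_mapsTo hgd hgm hα hz)
  have hfg : z • g z = f z := by simpa [h0] using sub_smul_dslope f 0 z
  calc ‖f z‖ = ‖z‖ * ‖g z‖ := by rw [← hfg, norm_smul]
    _ ≤ ‖z‖ * (‖deriv f 0‖ + ‖z‖) := by gcongr

theorem norm_lt_norm_two_mul_sub {A : ℝ} (hA : 0 < A) {w : ℂ} (hw : w.re < A) :
    ‖w‖ < ‖2 * (A : ℂ) - w‖ := by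
  rw [Complex.norm_def, Complex.norm_def]
  refine Real.sqrt_lt_sqrt (normSq_nonneg _) ?_
  simp only [normSq_apply, sub_re, sub_im, mul_re, mul_im, ofReal_re, ofReal_im, re_ofNat,
    im_ofNat]
  nlinarith

theorem norm_deriv_le_of_re_lt {F : ℂ → ℂ} {r A : ℝ} (hr : 0 < r)
    (hd : DifferentiableOn ℂ F (ball 0 r)) (h0 : F 0 = 0)
    (hre : ∀ z ∈ ball (0 : ℂ) r, (F z).re < A) : ‖deriv F 0‖ ≤ 2 * A / r := by
  have hA : 0 < A := by simpa [h0] using hre 0 (mem_ball_self hr)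
  have hlt : ∀ z ∈ ball (0 : ℂ) r, ‖F z‖ < ‖2 * (A : ℂ) - F z‖ := fun z hz =>
    norm_lt_norm_two_mul_sub hA (hre z hz)
  have hden : ∀ z ∈ ball (0 : ℂ) r, 2 * (A : ℂ) - F z ≠ 0 := fun z hz hzero => by
    simpa [hzero] using (norm_nonneg _).trans_lt (hlt z hz)
  -- the Cayley transform sends the half-plane `Re w < A` onto the unit disc
  set g := fun z => F z / (2 * (A : ℂ) - F z)
  have hgd : DifferentiableOn ℂ g (ball 0 r) :=
    hd.div ((differentiableOn_const _).sub hd) hden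
  have hgm : MapsTo g (ball 0 r) (closedBall (g 0) 1) := fun z hz => by
    rw [show g 0 = 0 by simp [g, h0], mem_closedBall_zero_iff, norm_div]
    exact div_le_one_of_le₀ (hlt z hz).le (norm_nonneg _)
  have hF' : HasDerivAt F (deriv F 0) 0 :=
    (hd.differentiableAt (ball_mem_nhds 0 hr)).hasDerivAt
  have hg' : deriv g 0 = deriv F 0 / (2 * A) := by
    have hA' : (A : ℂ) ≠ 0 := ofReal_ne_zero.2 hA.ne'
    have hg : HasDerivAt g _ 0 :=
      hF'.div ((hasDerivAt_const 0 _).sub hF') (hden 0 (mem_ball_self hr))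
    rw [hg.deriv, h0]
    field_simp
    ring
  have := Complex.norm_deriv_le_div_of_mapsTo_ball hgd hgm hr
  rw [hg', norm_div, show ‖(2 * A : ℂ)‖ = 2 * A by norm_cast; simp [hA.le],
    div_le_div_iff₀ (by positivity) hr] at this
  rw [le_div_iff₀ hr]
  linarith

theorem stmt13_general (ψ : ℝ → ℝ)
    (hmono : MonotoneOn ψ (Icc 0 1))
    (δ : ℝ) (xT : ℂ) (lam : ℝ) (hlam : 0 < lam)
    (φ : ℂ → ℂ × ℂ) (hφdiff : DifferentiableOn ℂ φ (ball (0 : ℂ) 1))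
    (hφmaps : MapsTo φ (ball (0 : ℂ) 1) (Gpsi ψ))
    (hφ0 : φ 0 = pdel δ)
    (hφ'0 : deriv φ 0 = lam • (((1 : ℂ), xT) : ℂ × ℂ))
    (r : ℝ) (hr : r ∈ Ioc (0 : ℝ) 1) :
    lam ≤ 2 * (ψ (min 1 (r * (lam * ‖xT‖ + r))) + δ) / r := by
  obtain ⟨hr0, hr1⟩ := hr
  set m := min 1 (r * (lam * ‖xT‖ + r))
  have hφ' : HasDerivAt φ (deriv φ 0) 0 :=
    (hφdiff.differentiableAt (ball_mem_nhds 0 one_pos)).hasDerivAt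
  have hφ₂ : ∀ z ∈ ball (0 : ℂ) r, ‖(φ z).2‖ ≤ m := by
    intro z hz
    have hz1 : z ∈ ball (0 : ℂ) 1 := ball_subset_ball hr1 hz
    have hbound := norm_le_mul_norm_deriv_add_of_mapsTo hφdiff.snd
      (fun w hw => mem_ball_zero_iff.2 (hφmaps hw).2.1) (by simp [hφ0, pdel]) hz1
    rw [hφ'.snd.deriv, hφ'0] at hbound
    simp only [Prod.smul_snd, real_smul, norm_mul, norm_real, Real.norm_of_nonneg hlam.le]
      at hbound
    have hzr : ‖z‖ < r := mem_ball_zero_iff.1 hz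
    refine le_min (hφmaps hz1).2.1.le (hbound.trans ?_)
    gcongr
  have hφ₁ : ∀ z ∈ ball (0 : ℂ) r, ((φ z).1 + δ).re < ψ m + δ := by
    intro z hz
    have hG := hφmaps (ball_subset_ball hr1 hz)
    have hm : m ∈ Icc (0 : ℝ) 1 := ⟨le_min zero_le_one (by positivity), min_le_left _ _⟩
    have := hmono ⟨norm_nonneg _, hG.2.1.le⟩ hm (hφ₂ z hz)
    simp only [add_re, ofReal_re]
    linarith [hG.2.2]
  have := norm_deriv_le_of_re_lt hr0 ((hφdiff.fst.mono (ball_subset_ball hr1)).add_const _)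
    (by simp [hφ0, pdel]) hφ₁
  rw [(hφ'.fst.add_const _).deriv, hφ'0] at this
  simpa [real_smul, abs_of_pos hlam] using this

/-- key lemma: if `φ : 𝔻 → G_ψ` is holomorphic with `φ(0) = p_δ` and
`φ'(0) = λ·(1, x_T)`, then for `0 < r ≤ 1`, with `M = ψ(min(1, r(λ|x_T| + r)))`,
one has `λ ≤ 2(M + δ)/r`. -/
theorem stmt13 (ψ : ℝ → ℝ)
    (hcont : ContinuousOn ψ (Icc 0 1)) (hψ0 : ψ 0 = 0)
    (hnonneg : ∀ x ∈ Icc (0 : ℝ) 1, 0 ≤ ψ x)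
    (hmono : MonotoneOn ψ (Icc 0 1))
    (δ : ℝ) (hδ : δ ∈ Ioo (0 : ℝ) 1) (xT : ℂ) (lam : ℝ) (hlam : 0 < lam)
    (φ : ℂ → ℂ × ℂ) (hφdiff : DifferentiableOn ℂ φ (ball (0 : ℂ) 1))
    (hφmaps : MapsTo φ (ball (0 : ℂ) 1) (Gpsi ψ))
    (hφ0 : φ 0 = pdel δ)
    (hφ'0 : deriv φ 0 = lam • (((1 : ℂ), xT) : ℂ × ℂ))
    (r : ℝ) (hr : r ∈ Ioc (0 : ℝ) 1) :
    lam ≤ 2 * (ψ (min 1 (r * (lam * ‖xT‖ + r))) + δ) / r :=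
  stmt13_general ψ hmono δ xT lam hlam φ hφdiff hφmaps hφ0 hφ'0 r hr
end

section
/- Assume ψ : [0,1] → [0,∞) is continuous and strictly increasing with ψ(0) = 0, and that x ↦ ψ(x)/x is nondecreasing on (0,1). Let δ ∈ (0, ψ(1)) satisfy δ + δ/ψ⁻¹(δ) ≤ 1. Then for every a ∈ ℂ with |a| ≤ δ/ψ⁻¹(δ) and every θ ∈ ℝ, the holomorphic map φ(ζ) := (−δ + aζ, e^{iθ}ζ) maps 𝔻 into G_ψ. In particular, κ_{G_ψ}(p_δ; (1, ψ⁻¹(δ)/δ)) ≤ ψ⁻¹(δ)/δ. -/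
open Complex Metric Set

/- With `r = ψ⁻¹(δ)`, along the disc `ζ ↦ (−δ + aζ, e^{iθ}ζ)` we have `Re z₁ ≤ −δ + (δ/r)|z₂|`,
and the line `t ↦ (δ/r) t − δ` stays strictly below `ψ` on `[0, 1)`: left of `r` it is negative,
right of `r` the monotonicity of `ψ(x)/x` puts `ψ` above the ray `t ↦ ψ(r) t / r`. The disc with
`a = δ/r`, `θ = 0` is then a competitor for the Kobayashi–Royden metric. -/

theorem leftInv_mem_Ioo_of_mem_Ioo {ψ ψinv : ℝ → ℝ} (hcont : ContinuousOn ψ (Icc 0 1))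
    (hψ0 : ψ 0 = 0) (hinv : ∀ x ∈ Icc (0 : ℝ) 1, ψinv (ψ x) = x) {δ : ℝ}
    (hδ : δ ∈ Ioo 0 (ψ 1)) : ψinv δ ∈ Ioo 0 1 ∧ ψ (ψinv δ) = δ := by
  obtain ⟨x, hx, rfl⟩ := intermediate_value_Icc zero_le_one hcont
    (by rw [hψ0]; exact Ioo_subset_Icc_self hδ)
  rw [hinv x hx]
  refine ⟨⟨hx.1.lt_of_ne ?_, hx.2.lt_of_ne ?_⟩, rfl⟩ <;> rintro rfl
  · exact hδ.1.ne' hψ0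
  · exact hδ.2.false

theorem div_mul_sub_lt_of_monotoneOn_div {ψ : ℝ → ℝ} (hnonneg : ∀ x ∈ Icc (0 : ℝ) 1, 0 ≤ ψ x)
    (hquot : MonotoneOn (fun x => ψ x / x) (Ioo 0 1)) {r t : ℝ} (hr : r ∈ Ioo 0 1)
    (hψr : 0 < ψ r) (ht : t ∈ Ico 0 1) : ψ r / r * t - ψ r < ψ t := by
  rcases lt_or_ge t r with htr | hrt
  · have hline_neg : ψ r / r * t < ψ r := by
      rw [div_mul_eq_mul_div, div_lt_iff₀ hr.1]
      exact mul_lt_mul_of_pos_left htr hψr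
    linarith [hnonneg t (Ico_subset_Icc_self ht)]
  · have htpos : 0 < t := hr.1.trans_le hrt
    have hslope : ψ r / r ≤ ψ t / t := hquot hr ⟨htpos, ht.2⟩ hrt
    calc ψ r / r * t - ψ r < ψ r / r * t := sub_lt_self _ hψr
      _ ≤ ψ t / t * t := mul_le_mul_of_nonneg_right hslope htpos.le
      _ = ψ t := div_mul_cancel₀ _ htpos.ne'

theorem mapsTo_ball_Gpsi {ψ : ℝ → ℝ} {c δ : ℝ} (hline : ∀ t ∈ Ico (0 : ℝ) 1, c * t - δ < ψ t)
    (hc : 0 < c) (hδ : 0 ≤ δ) (hsum : δ + c ≤ 1) {a u : ℂ} (ha : ‖a‖ ≤ c) (hu : ‖u‖ = 1) :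
    MapsTo (fun ζ : ℂ => (-(δ : ℂ) + a * ζ, u * ζ)) (ball 0 1) (Gpsi ψ) := by
  intro ζ hζ
  rw [mem_ball_zero_iff] at hζ
  have hu_ζ : ‖u * ζ‖ = ‖ζ‖ := by rw [norm_mul, hu, one_mul]
  have haζ : ‖a * ζ‖ ≤ c * ‖ζ‖ := by
    rw [norm_mul]; exact mul_le_mul_of_nonneg_right ha (norm_nonneg ζ)
  have hcζ : c * ‖ζ‖ < c := mul_lt_of_lt_one_right hc hζ
  have hnorm : ‖-(δ : ℂ) + a * ζ‖ ≤ δ + c * ‖ζ‖ := by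
    calc ‖-(δ : ℂ) + a * ζ‖ ≤ ‖-(δ : ℂ)‖ + ‖a * ζ‖ := norm_add_le _ _
      _ ≤ δ + c * ‖ζ‖ := by rw [norm_neg, norm_real, Real.norm_of_nonneg hδ]; linarith
  have hre : (-(δ : ℂ) + a * ζ).re ≤ c * ‖ζ‖ - δ := by
    simp only [add_re, neg_re, ofReal_re]
    linarith [re_le_norm (a * ζ)]
  refine ⟨by linarith, by rwa [hu_ζ], ?_⟩
  rw [hu_ζ]
  exact hre.trans_lt (hline _ ⟨norm_nonneg ζ, hζ⟩)

theorem kob_le_of_mapsTo {Ω : Set (ℂ × ℂ)} {z X : ℂ × ℂ} {φ : ℂ → ℂ × ℂ} {lam : ℝ}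
    (hlam : 0 < lam) (hφ : DifferentiableOn ℂ φ (ball 0 1)) (hmaps : MapsTo φ (ball 0 1) Ω)
    (hφ0 : φ 0 = z) (hderiv : deriv φ 0 = lam • X) : kob Ω z X ≤ 1 / lam := by
  refine csInf_le ⟨0, ?_⟩ ⟨lam, hlam, rfl, φ, hφ, hmaps, hφ0, hderiv⟩
  rintro c ⟨μ, hμ, rfl, -⟩
  positivity

theorem stmt16_general (ψ ψinv : ℝ → ℝ)
    (hcont : ContinuousOn ψ (Icc 0 1)) (hψ0 : ψ 0 = 0)
    (hnonneg : ∀ x ∈ Icc (0 : ℝ) 1, 0 ≤ ψ x)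
    (hinv1 : ∀ x ∈ Icc (0 : ℝ) 1, ψinv (ψ x) = x)
    (hquot : MonotoneOn (fun x => ψ x / x) (Ioo 0 1))
    (δ : ℝ) (hδ : δ ∈ Ioo 0 (ψ 1)) (hsmall : δ + δ / ψinv δ ≤ 1) :
    (∀ a : ℂ, ‖a‖ ≤ δ / ψinv δ → ∀ θ : ℝ,
      MapsTo (fun ζ : ℂ => ((-(δ : ℂ)) + a * ζ, Complex.exp (θ * Complex.I) * ζ))
        (ball (0 : ℂ) 1) (Gpsi ψ)) ∧
    kob (Gpsi ψ) (pdel δ) ((1 : ℂ), ((ψinv δ / δ : ℝ) : ℂ)) ≤ ψinv δ / δ := by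
  obtain ⟨hr, hψr⟩ := leftInv_mem_Ioo_of_mem_Ioo hcont hψ0 hinv1 hδ
  set r := ψinv δ
  have hline : ∀ t ∈ Ico (0 : ℝ) 1, δ / r * t - δ < ψ t := by
    simpa only [hψr] using fun t ↦ div_mul_sub_lt_of_monotoneOn_div hnonneg hquot hr (hψr ▸ hδ.1)
  have hc : 0 < δ / r := div_pos hδ.1 hr.1
  have hmaps : ∀ a : ℂ, ‖a‖ ≤ δ / r → ∀ u : ℂ, ‖u‖ = 1 →
      MapsTo (fun ζ : ℂ => (-(δ : ℂ) + a * ζ, u * ζ)) (ball 0 1) (Gpsi ψ) :=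
    fun a ha u hu ↦ mapsTo_ball_Gpsi hline hc hδ.1.le hsmall ha hu
  refine ⟨fun a ha θ ↦ hmaps a ha _ (norm_exp_ofReal_mul_I θ), ?_⟩
  have hderiv : HasDerivAt (fun ζ : ℂ => (-(δ : ℂ) + ((δ / r : ℝ) : ℂ) * ζ, 1 * ζ))
      (((δ / r : ℝ) : ℂ), 1) 0 := by
    convert (((hasDerivAt_id (0 : ℂ)).const_mul ((δ / r : ℝ) : ℂ)).const_add (-(δ : ℂ))).prodMk
      ((hasDerivAt_id (0 : ℂ)).const_mul 1) using 1
    · rfl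
    · rw [mul_one, mul_one]
  have hscale : (((δ / r : ℝ) : ℂ), (1 : ℂ)) = (δ / r : ℝ) • ((1 : ℂ), ((r / δ : ℝ) : ℂ)) := by
    ext <;> simp [hδ.1.ne', hr.1.ne']
  simpa only [one_div_div] using kob_le_of_mapsTo hc (by fun_prop)
    (hmaps _ (by rw [norm_real, Real.norm_of_nonneg hc.le]) 1 norm_one) (by simp [pdel])
    (hscale ▸ hderiv.deriv)

/-- the maps `ζ ↦ (−δ + aζ, e^{iθ}ζ)` with `|a| ≤ δ/ψ⁻¹(δ)` send `𝔻`
into `G_ψ`; consequently `κ_{G_ψ}(p_δ; (1, ψ⁻¹(δ)/δ)) ≤ ψ⁻¹(δ)/δ`. -/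
theorem stmt16 (ψ ψinv : ℝ → ℝ)
    (hcont : ContinuousOn ψ (Icc 0 1)) (hψ0 : ψ 0 = 0)
    (hnonneg : ∀ x ∈ Icc (0 : ℝ) 1, 0 ≤ ψ x)
    (hmono : StrictMonoOn ψ (Icc 0 1))
    (hinv1 : ∀ x ∈ Icc (0 : ℝ) 1, ψinv (ψ x) = x)
    (hinv2 : ∀ y ∈ Icc 0 (ψ 1), ψ (ψinv y) = y)
    (hquot : MonotoneOn (fun x => ψ x / x) (Ioo 0 1))
    (δ : ℝ) (hδ : δ ∈ Ioo 0 (ψ 1)) (hsmall : δ + δ / ψinv δ ≤ 1) :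
    (∀ a : ℂ, ‖a‖ ≤ δ / ψinv δ → ∀ θ : ℝ,
      MapsTo (fun ζ : ℂ => ((-(δ : ℂ)) + a * ζ, Complex.exp (θ * Complex.I) * ζ))
        (ball (0 : ℂ) 1) (Gpsi ψ)) ∧
    kob (Gpsi ψ) (pdel δ) ((1 : ℂ), ((ψinv δ / δ : ℝ) : ℂ)) ≤ ψinv δ / δ :=
  stmt16_general ψ ψinv hcont hψ0 hnonneg hinv1 hquot δ hδ hsmall
end
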